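/- arXiv:math/0511633 — 4 statements merged into one kernel-verified Lean document; each statement's English description precedes it below -/
import Mathlib

section
/- Every Markoff triple (x, y, z) of positive integers can be obtained from (1, 1, 1) by a finite sequence of exchange operations, each of which replaces one coordinate w of the triple by (sum of squares of the other two coordinates)/w. -/
/-- One exchange move on an (ordered) triple of integers: one coordinate `w`
is replaced by `(sum of squares of the other two)/w`, encoded multiplicatively. -/
def MarkoffStep (p q : ℤ × ℤ × ℤ) : Prop :=
  (q.2.1 = p.2.1 ∧ q.2.2 = p.2.2 ∧ q.1 * p.1 = p.2.1 ^ 2 + p.2.2 ^ 2) ∨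
  (q.1 = p.1 ∧ q.2.2 = p.2.2 ∧ q.2.1 * p.2.1 = p.1 ^ 2 + p.2.2 ^ 2) ∨
  (q.1 = p.1 ∧ q.2.1 = p.2.1 ∧ q.2.2 * p.2.2 = p.1 ^ 2 + p.2.1 ^ 2)

lemma markoff_descent (x y z : ℤ) (hy : 0 < y) (hz : 0 < z) (h2 : 2 ≤ x)
    (hxy : y ≤ x) (hxz : z ≤ x) (h : x ^ 2 + y ^ 2 + z ^ 2 = 3 * x * y * z) :
    0 < 3 * y * z - x ∧ 3 * y * z - x < x := by
  constructor
  · nlinarith [sq_nonneg y, sq_nonneg z, mul_pos hy hz]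
  · nlinarith [mul_pos hy hz, sq_nonneg (y - z),
      mul_nonneg (mul_nonneg (sub_nonneg.2 hxy) (sub_nonneg.2 hxz)) hy.le,
      mul_nonneg (sub_nonneg.2 hxy) (sub_nonneg.2 hxz),
      mul_nonneg (mul_nonneg (sub_nonneg.2 hxy) (sub_nonneg.2 hxz)) hz.le,
      mul_nonneg (sub_nonneg.2 (by linarith : (1:ℤ) ≤ y))
        (sub_nonneg.2 (by linarith : (1:ℤ) ≤ z))]

lemma markoff_aux (n : ℕ) : ∀ x y z : ℤ, 0 < x → 0 < y → 0 < z →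
    x ^ 2 + y ^ 2 + z ^ 2 = 3 * x * y * z → x + y + z ≤ n →
    Relation.ReflTransGen MarkoffStep (1, 1, 1) (x, y, z) := by
  induction n with
  | zero => intro x y z hx hy hz _ hn; omega
  | succ n ih =>
    intro x y z hx hy hz h hn
    by_cases hone : x = 1 ∧ y = 1 ∧ z = 1
    · obtain ⟨h1, h2, h3⟩ := hone; subst h1; subst h2; subst h3; exact .refl
    by_cases hc1 : y ≤ x ∧ z ≤ x
    · obtain ⟨hxy, hxz⟩ := hc1
      have h2 : 2 ≤ x := by
        by_contra hlt
        exact hone ⟨by omega, by omega, by omega⟩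
      obtain ⟨hp, hlt⟩ := markoff_descent x y z hy hz h2 hxy hxz h
      have heq : (3 * y * z - x) ^ 2 + y ^ 2 + z ^ 2 = 3 * (3 * y * z - x) * y * z := by
        linear_combination h
      have hprev := ih (3 * y * z - x) y z hp hy hz heq (by omega)
      refine hprev.tail (Or.inl ⟨rfl, rfl, ?_⟩)
      show x * (3 * y * z - x) = y ^ 2 + z ^ 2
      linear_combination -h
    · by_cases hc2 : x ≤ y ∧ z ≤ y
      · obtain ⟨hyx, hyz⟩ := hc2
        have h2 : 2 ≤ y := by
          by_contra hlt
          exact hc1 ⟨by omega, by omega⟩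
        obtain ⟨hp, hlt⟩ := markoff_descent y x z hx hz h2 hyx hyz
          (by linear_combination h)
        have heq : x ^ 2 + (3 * x * z - y) ^ 2 + z ^ 2 = 3 * x * (3 * x * z - y) * z := by
          linear_combination h
        have hprev := ih x (3 * x * z - y) z hx hp hz heq (by omega)
        refine hprev.tail (Or.inr (Or.inl ⟨rfl, rfl, ?_⟩))
        show y * (3 * x * z - y) = x ^ 2 + z ^ 2
        linear_combination -h
      · have hzx : x ≤ z ∧ y ≤ z := by
          constructor <;> by_contra hlt <;> omega
        obtain ⟨hzx, hzy⟩ := hzx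
        have h2 : 2 ≤ z := by
          by_contra hlt
          exact hc1 ⟨by omega, by omega⟩
        obtain ⟨hp, hlt⟩ := markoff_descent z x y hx hy h2 hzx hzy
          (by linear_combination h)
        have heq : x ^ 2 + y ^ 2 + (3 * x * y - z) ^ 2 = 3 * x * y * (3 * x * y - z) := by
          linear_combination h
        have hprev := ih x y (3 * x * y - z) hx hy hp heq (by omega)
        refine hprev.tail (Or.inr (Or.inr ⟨rfl, rfl, ?_⟩))
        show z * (3 * x * y - z) = x ^ 2 + y ^ 2
        linear_combination -h

theorem markoff_reachable (x y z : ℤ) (hx : 0 < x) (hy : 0 < y) (hz : 0 < z)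
    (h : x ^ 2 + y ^ 2 + z ^ 2 = 3 * x * y * z) :
    Relation.ReflTransGen MarkoffStep (1, 1, 1) (x, y, z) := by
  exact markoff_aux (x + y + z).toNat x y z hx hy hz h (by omega)
end

section
/- The sequence defined by f(0) = f(1) = f(2) = 1 and f(n) = (f(n−1)² + f(n−2)²)/f(n−3) for n ≥ 3 consists entirely of positive integers, and its first values are 1, 1, 1, 2, 5, 29, 433, 37666. -/
theorem dana_scott_integrality (f : ℕ → ℚ)
    (h0 : f 0 = 1) (h1 : f 1 = 1) (h2 : f 2 = 1)
    (hrec : ∀ n, f (n + 3) = (f (n + 2) ^ 2 + f (n + 1) ^ 2) / f n) :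
    (∀ n, ∃ k : ℕ, 0 < k ∧ f n = (k : ℚ)) ∧
    f 3 = 2 ∧ f 4 = 5 ∧ f 5 = 29 ∧ f 6 = 433 ∧ f 7 = 37666 := by
  have key : ∀ n, ∃ a b c : ℕ, 0 < a ∧ 0 < b ∧ 0 < c ∧
      f n = a ∧ f (n+1) = b ∧ f (n+2) = c ∧
      f n ^ 2 + f (n+1) ^ 2 + f (n+2) ^ 2 = 3 * f n * f (n+1) * f (n+2) := by
    intro n
    induction n with
    | zero =>
      exact ⟨1, 1, 1, one_pos, one_pos, one_pos, by simp [h0], by simp [h1], by simp [h2],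
        by rw [h0, h1, h2]; norm_num⟩
    | succ n ih =>
      obtain ⟨a, b, c, ha, hb, hc, hfa, hfb, hfc, hinv⟩ := ih
      have hane : f n ≠ 0 := by
        rw [hfa]; exact_mod_cast ha.ne'
      have hrec' : f (n+3) = 3 * f (n+1) * f (n+2) - f n := by
        rw [hrec n, div_eq_iff hane]
        linear_combination hinv
      have hlt : a < 3 * b * c := by
        have : (a : ℚ) < 3 * b * c := by
          have h3 : f (n+3) > 0 := by
            rw [hrec n, hfa, hfb, hfc]
            positivity
          rw [hrec'] at h3
          rw [hfa, hfb, hfc] at h3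
          push_cast
          linarith
        exact_mod_cast this
      refine ⟨b, c, 3 * b * c - a, hb, hc, by omega, hfb, hfc, ?_, ?_⟩
      · rw [hrec', hfa, hfb, hfc]
        push_cast [Nat.cast_sub hlt.le]
        ring
      · rw [hrec', hfa, hfb, hfc] at *
        nlinarith [hinv]
  have h3 : f 3 = 2 := by have := hrec 0; norm_num [h0, h1, h2] at this; exact this
  have h4 : f 4 = 5 := by have := hrec 1; norm_num [h1, h2, h3] at this; exact this
  have h5 : f 5 = 29 := by have := hrec 2; norm_num [h2, h3, h4] at this; exact this
  have h6 : f 6 = 433 := by have := hrec 3; norm_num [h3, h4, h5] at this; exact this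
  have h7 : f 7 = 37666 := by have := hrec 4; norm_num [h4, h5, h6] at this; exact this
  exact ⟨fun n => by obtain ⟨a, _, _, ha, _, _, hfa, _⟩ := key n; exact ⟨a, ha, hfa⟩,
    h3, h4, h5, h6, h7⟩
end

section
/- For the Dana Scott sequence f with f(0)=f(1)=f(2)=1 and f(n)·f(n−3) = f(n−1)² + f(n−2)², every three consecutive terms (f(n), f(n+1), f(n+2)) form a Markoff triple, i.e. f(n)² + f(n+1)² + f(n+2)² = 3·f(n)·f(n+1)·f(n+2). -/
theorem dana_scott_markoff_triples (f : ℕ → ℚ)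
    (h0 : f 0 = 1) (h1 : f 1 = 1) (h2 : f 2 = 1)
    (hrec : ∀ n, f (n + 3) * f n = f (n + 2) ^ 2 + f (n + 1) ^ 2) :
    ∀ n, f n ^ 2 + f (n + 1) ^ 2 + f (n + 2) ^ 2 = 3 * f n * f (n + 1) * f (n + 2) := by
  have key : ∀ n, 0 < f n ∧ 0 < f (n + 1) ∧ 0 < f (n + 2) ∧
      f n ^ 2 + f (n + 1) ^ 2 + f (n + 2) ^ 2 = 3 * f n * f (n + 1) * f (n + 2) := by
    intro n
    induction n with
    | zero => refine ⟨?_, ?_, ?_, ?_⟩ <;> simp [h0, h1, h2] <;> norm_num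
    | succ n ih =>
      obtain ⟨p0, p1, p2, hm⟩ := ih
      have hr := hrec n
      have p3 : 0 < f (n + 3) := by
        have hpos : 0 < f (n + 2) ^ 2 + f (n + 1) ^ 2 := by positivity
        rw [← hr] at hpos
        by_contra h
        push_neg at h
        nlinarith
      have hne : f n ≠ 0 := p0.ne'
      have hval : f (n + 3) = 3 * f (n + 1) * f (n + 2) - f n := by
        have : f (n + 3) * f n = (3 * f (n + 1) * f (n + 2) - f n) * f n := by
          rw [hr]; nlinarith [hm]
        exact mul_right_cancel₀ hne this
      refine ⟨p1, p2, p3, ?_⟩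
      have : n + 1 + 2 = n + 3 := by ring
      rw [show n + 1 + 1 = n + 2 from rfl, this, hval]
      nlinarith [hm]
  intro n
  exact (key n).2.2.2
end

section
/- Apply the sideways frieze recurrence to a 5-row array whose top and bottom rows are all 1's and whose initial zig-zag consists of formal variables x, y, z: define y' = (xz+1)/y, x' = (y'+1)/x, z' = (y'+1)/z in the field of rational functions ℚ(x,y,z). Then iterating this map (x,y,z) ↦ (x',y',z') six times returns the original triple (x,y,z). -/
/-- The field of rational functions ℚ(x, y, z). -/
noncomputable abbrev RatFuncXYZ : Type := FractionRing (MvPolynomial (Fin 3) ℚ)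

/-- The sideways frieze recurrence for a 5-row frieze pattern acting on a
zig-zag (x, y, z): y' = (xz+1)/y, x' = (y'+1)/x, z' = (y'+1)/z. -/
noncomputable def friezeStep (p : RatFuncXYZ × RatFuncXYZ × RatFuncXYZ) :
    RatFuncXYZ × RatFuncXYZ × RatFuncXYZ :=
  ((((p.1 * p.2.2 + 1) / p.2.1) + 1) / p.1,
   (p.1 * p.2.2 + 1) / p.2.1,
   (((p.1 * p.2.2 + 1) / p.2.1) + 1) / p.2.2)

/-!
Three steps of the sideways recurrence send a zig-zag `(x, y, z)` to its mirror image `(z, y, x)`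
(the frieze has a glide-reflection symmetry), so six steps return to the start. Along the way one
divides by `y`, `x`, `z`, `x z + 1`, `x z + y + 1`, `x z + (y + 1) ^ 2` and `y + 1`; for the generic
zig-zag of ℚ(x, y, z) these are images of polynomials that do not vanish at `(1, 1, 1)`.
-/

namespace Frieze

variable {K : Type*} [Field K]

def step (p : K × K × K) : K × K × K :=
  ((((p.1 * p.2.2 + 1) / p.2.1) + 1) / p.1,
   (p.1 * p.2.2 + 1) / p.2.1,
   (((p.1 * p.2.2 + 1) / p.2.1) + 1) / p.2.2)

theorem step_apply (x y z : K) :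
    step (x, y, z) = (((x * z + 1) / y + 1) / x, (x * z + 1) / y, ((x * z + 1) / y + 1) / z) :=
  rfl

theorem step_first {x y z : K} (hx : x ≠ 0) (hy : y ≠ 0) (hz : z ≠ 0) :
    step (x, y, z) =
      ((x * z + y + 1) / (x * y), (x * z + 1) / y, (x * z + y + 1) / (y * z)) := by
  rw [step_apply, Prod.mk.injEq, Prod.mk.injEq]
  refine ⟨?_, rfl, ?_⟩ <;> field_simp <;> ring

theorem step_second {x y z : K} (hx : x ≠ 0) (hy : y ≠ 0) (hz : z ≠ 0)
    (h1 : x * z + 1 ≠ 0) (h2 : x * z + y + 1 ≠ 0) :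
    step ((x * z + y + 1) / (x * y), (x * z + 1) / y, (x * z + y + 1) / (y * z)) =
      ((y + 1) / z, (x * z + (y + 1) ^ 2) / (x * y * z), (y + 1) / x) := by
  rw [step_apply, Prod.mk.injEq, Prod.mk.injEq]
  refine ⟨?_, ?_, ?_⟩ <;> field_simp <;> ring

theorem step_third {x y z : K} (hx : x ≠ 0) (hy : y ≠ 0) (hz : z ≠ 0)
    (h3 : x * z + (y + 1) ^ 2 ≠ 0) (h4 : y + 1 ≠ 0) :
    step ((y + 1) / z, (x * z + (y + 1) ^ 2) / (x * y * z), (y + 1) / x) = (z, y, x) := by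
  have hy' : ((y + 1) / z * ((y + 1) / x) + 1) / ((x * z + (y + 1) ^ 2) / (x * y * z)) = y := by
    rw [div_eq_iff (by simp [*])]
    field_simp
    ring
  rw [step_apply, hy']
  simp only [Prod.mk.injEq, true_and]
  constructor <;> field_simp

theorem step_iterate_three {x y z : K} (hx : x ≠ 0) (hy : y ≠ 0) (hz : z ≠ 0)
    (h1 : x * z + 1 ≠ 0) (h2 : x * z + y + 1 ≠ 0) (h3 : x * z + (y + 1) ^ 2 ≠ 0)
    (h4 : y + 1 ≠ 0) :
    step^[3] (x, y, z) = (z, y, x) := by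
  simp only [Function.iterate_succ_apply, Function.iterate_zero_apply]
  rw [step_first hx hy hz, step_second hx hy hz h1 h2, step_third hx hy hz h3 h4]

theorem step_iterate_six {x y z : K} (hx : x ≠ 0) (hy : y ≠ 0) (hz : z ≠ 0)
    (h1 : x * z + 1 ≠ 0) (h2 : x * z + y + 1 ≠ 0) (h3 : x * z + (y + 1) ^ 2 ≠ 0)
    (h4 : y + 1 ≠ 0) :
    step^[6] (x, y, z) = (x, y, z) := by
  rw [Function.iterate_add_apply step 3 3, step_iterate_three hx hy hz h1 h2 h3 h4]
  rw [mul_comm] at h1 h2 h3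
  exact step_iterate_three hz hy hx h1 h2 h3 h4

end Frieze

theorem MvPolynomial.algebraMap_fractionRing_ne_zero {σ R : Type*} [CommRing R] [IsDomain R]
    {p : MvPolynomial σ R} (v : σ → R) (hp : eval v p ≠ 0) :
    algebraMap (MvPolynomial σ R) (FractionRing (MvPolynomial σ R)) p ≠ 0 := by
  rw [ne_eq, IsFractionRing.to_map_eq_zero_iff]
  rintro rfl
  simp at hp

theorem frieze_period_six :
    friezeStep^[6]
      (algebraMap (MvPolynomial (Fin 3) ℚ) RatFuncXYZ (MvPolynomial.X 0),
       algebraMap (MvPolynomial (Fin 3) ℚ) RatFuncXYZ (MvPolynomial.X 1),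
       algebraMap (MvPolynomial (Fin 3) ℚ) RatFuncXYZ (MvPolynomial.X 2)) =
      (algebraMap (MvPolynomial (Fin 3) ℚ) RatFuncXYZ (MvPolynomial.X 0),
       algebraMap (MvPolynomial (Fin 3) ℚ) RatFuncXYZ (MvPolynomial.X 1),
       algebraMap (MvPolynomial (Fin 3) ℚ) RatFuncXYZ (MvPolynomial.X 2)) := by
  set φ := algebraMap (MvPolynomial (Fin 3) ℚ) RatFuncXYZ
  have hφ (p : MvPolynomial (Fin 3) ℚ) (hp : MvPolynomial.eval 1 p ≠ 0) : φ p ≠ 0 :=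
    MvPolynomial.algebraMap_fractionRing_ne_zero 1 hp
  refine Frieze.step_iterate_six (hφ _ (by simp)) (hφ _ (by simp)) (hφ _ (by simp)) ?_ ?_ ?_ ?_ <;>
    simp only [← map_one φ, ← map_add, ← map_mul, ← map_pow] <;>
    exact hφ _ (by norm_num)
end
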